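/- arXiv:1812.02894 — 4 statements merged into one kernel-verified Lean document; each statement's English description precedes it below -/
import Mathlib

section
/- Let G be a simple graph with at least one vertex. If α(G) ≤ κ(G) + 1, then G has a Hamilton path (a path containing every vertex of G). -/
/-!
Take a longest path `a … b` and suppose that some vertex `v` lies off it. Let `R` be the set of
vertices reachable from `v` without touching the path, and call a vertex of the path attached if
it has a neighbour in `R`. Neither end is attached, so deleting the attached vertices separates
`v` from `a`: there are at least `κ` of them. Their successors on the path, together with `v` and
`a`, are pairwise nonadjacent, since any edge among them would let us reroute the path through
`R` (or rotate it at `a`) into a longer one. Hence `α ≥ κ + 2`.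
-/

open SimpleGraph

/-- The independence number of a graph `G`: the largest cardinality of a set of
pairwise nonadjacent vertices. -/
noncomputable def SimpleGraph.indepNumber {V : Type*} [Fintype V] (G : SimpleGraph V) : ℕ :=
  sSup {n | ∃ s : Finset V, (s : Set V).Pairwise (fun u v => ¬ G.Adj u v) ∧ s.card = n}

/-- `G` is `k`-connected: it has more than `k` vertices and remains connected after
deletion of any set of fewer than `k` vertices. -/
def SimpleGraph.IsKConnected {V : Type*} [Fintype V] (G : SimpleGraph V) (k : ℕ) : Prop :=
  k < Fintype.card V ∧ ∀ s : Finset V, s.card < k → (G.induce {v : V | v ∉ s}).Connected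

/-- The vertex connectivity of `G`: the largest `k` such that `G` is `k`-connected. -/
noncomputable def SimpleGraph.vertexConnectivity {V : Type*} [Fintype V]
    (G : SimpleGraph V) : ℕ :=
  sSup {k | G.IsKConnected k}

namespace SimpleGraph

variable {V : Type*} {G : SimpleGraph V}

variable (G) in
/-- Paths are handled as vertex lists, so that rerouting a path is plain list surgery. -/
def IsListPath (l : List V) : Prop := l.IsChain G.Adj ∧ l.Nodup

variable (G) in
def IsLongestListPath (l : List V) : Prop :=
  G.IsListPath l ∧ ∀ l', G.IsListPath l' → l'.length ≤ l.length

lemma isChain_adj_reverse {l : List V} : l.reverse.IsChain G.Adj ↔ l.IsChain G.Adj := by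
  simp only [List.isChain_reverse, G.adj_comm]

lemma isIndepSet_insert {s : Set V} {a : V} :
    G.IsIndepSet (insert a s) ↔ G.IsIndepSet s ∧ ∀ b ∈ s, a ≠ b → ¬ G.Adj a b := by
  simp [IsIndepSet, Set.pairwise_insert, G.adj_comm]

lemma card_le_indepNumber [Fintype V] {s : Finset V} (hs : G.IsIndepSet (s : Set V)) :
    s.card ≤ G.indepNumber :=
  le_csSup ⟨Fintype.card V, by rintro _ ⟨t, -, rfl⟩; exact t.card_le_univ⟩ ⟨s, hs, rfl⟩

lemma isKConnected_vertexConnectivity [Fintype V] [Nonempty V] (G : SimpleGraph V) :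
    G.IsKConnected G.vertexConnectivity :=
  Nat.sSup_mem (s := {k | G.IsKConnected k})
    ⟨0, Fintype.card_pos, fun _ hs => absurd hs (Nat.not_lt_zero _)⟩
    ⟨Fintype.card V, fun _ hk => hk.1.le⟩

namespace IsListPath

lemma reverse {l : List V} (hl : G.IsListPath l) : G.IsListPath l.reverse :=
  ⟨isChain_adj_reverse.2 hl.1, List.nodup_reverse.2 hl.2⟩

/-- Pósa rotation. -/
lemma rotate {p q : List V} {h u : V} (hl : G.IsListPath (p ++ q)) (hh : h ∉ p ++ q)
    (hu : p.getLast? = some u) (hhu : G.Adj h u)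
    (hpq : ∀ a ∈ p.head?, ∀ w ∈ q.head?, G.Adj a w) :
    G.IsListPath (h :: (p.reverse ++ q)) := by
  obtain ⟨hc, hn⟩ := hl
  rw [List.isChain_append] at hc
  refine ⟨List.IsChain.cons (List.IsChain.append (isChain_adj_reverse.2 hc.1) hc.2.1 ?_) ?_,
    List.nodup_cons.2 ⟨by simpa using hh, ((List.reverse_perm p).append_right q).nodup_iff.2 hn⟩⟩
  · simpa using hpq
  · simpa [hu] using hhu

lemma insert_detour {p q D : List V} {d₁ d₂ : V} (hl : G.IsListPath (p ++ q))
    (hD : G.IsListPath D) (hD₁ : D.head? = some d₁) (hD₂ : D.getLast? = some d₂)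
    (hdisj : ∀ x ∈ D, x ∉ p ++ q) (h₁ : ∀ u ∈ p.getLast?, G.Adj u d₁)
    (h₂ : ∀ w ∈ q.head?, G.Adj d₂ w) : G.IsListPath (p ++ D ++ q) := by
  obtain ⟨hc, hn⟩ := hl
  rw [List.isChain_append] at hc
  refine ⟨List.IsChain.append (List.IsChain.append hc.1 hD.1 ?_) hc.2.1 ?_, ?_⟩
  · simpa [hD₁] using h₁
  · simpa [List.getLast?_append, hD₂] using h₂
  · refine List.Perm.nodup_iff ?_ |>.2 (hD.2.append hn fun x hx => hdisj x hx)
    simpa using List.perm_append_comm.append_right q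

lemma cross_detour {p M q D : List V} {d₁ d₂ m₁ m₂ : V} (hl : G.IsListPath (p ++ M ++ q))
    (hD : G.IsListPath D) (hD₁ : D.head? = some d₁) (hD₂ : D.getLast? = some d₂)
    (hM₁ : M.head? = some m₁) (hM₂ : M.getLast? = some m₂)
    (hdisj : ∀ x ∈ D, x ∉ p ++ M ++ q) (h₁ : ∀ u ∈ p.getLast?, G.Adj u d₁)
    (h₂ : G.Adj d₂ m₂) (h₃ : ∀ w ∈ q.head?, G.Adj m₁ w) :
    G.IsListPath (p ++ D ++ M.reverse ++ q) := by
  classical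
  obtain ⟨hc, hn⟩ := hl
  rw [List.isChain_append, List.isChain_append] at hc
  refine ⟨List.IsChain.append (List.IsChain.append (List.IsChain.append hc.1.1 hD.1 ?_)
    (isChain_adj_reverse.2 hc.1.2.1) ?_) hc.2.1 ?_, ?_⟩
  · simpa [hD₁] using h₁
  · simpa [List.getLast?_append, hD₂, hM₂] using h₂
  · simpa [List.getLast?_append, hM₁] using h₃
  · refine List.Perm.nodup_iff ?_ |>.2 (hD.2.append hn fun x hx => hdisj x hx)
    refine List.perm_iff_count.2 fun x => ?_
    simp only [List.count_append, List.count_reverse]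
    omega

lemma exists_isHamiltonian [DecidableEq V] {l : List V} (hl : G.IsListPath l)
    (hne : l ≠ []) (hcover : ∀ v, v ∈ l) : ∃ (u v : V) (p : G.Walk u v), p.IsHamiltonian :=
  ⟨_, _, Walk.ofSupport l hne hl.1, fun a => by
    rw [Walk.support_ofSupport]; exact List.count_eq_one_of_mem hl.2 (hcover a)⟩

end IsListPath

lemma exists_isLongestListPath [Fintype V] (G : SimpleGraph V) : ∃ l, G.IsLongestListPath l := by
  classical
  let P n := ∃ l, G.IsListPath l ∧ l.length = n
  obtain ⟨l, hl, hlen⟩ : P (Nat.findGreatest P (Fintype.card V)) :=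
    Nat.findGreatest_spec (Nat.zero_le _) ⟨[], by simp [IsListPath]⟩
  exact ⟨l, hl, fun l' hl' => hlen ▸ Nat.le_findGreatest hl'.2.length_le_card ⟨l', hl', rfl⟩⟩

lemma Walk.exists_isListPath_subset_support {x y : V} (p : G.Walk x y) :
    ∃ D, G.IsListPath D ∧ D.head? = some x ∧ D.getLast? = some y ∧ D ⊆ p.support := by
  classical
  refine ⟨p.bypass.support, ⟨p.bypass.isChain_adj_support, p.bypass_isPath.support_nodup⟩,
    ?_, ?_, p.support_bypass_subset_support⟩
  · rw [← Walk.cons_tail_support, List.head?_cons]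
  · rw [List.getLast?_eq_some_getLast p.bypass.support_ne_nil, Walk.getLast_support]

variable (G) in
def reachAvoiding (l : List V) (v : V) : Set V :=
  {y | ∃ p : G.Walk v y, ∀ z ∈ p.support, z ∉ l}

section reachAvoiding

variable {l : List V} {v y z : V}

lemma self_mem_reachAvoiding (hv : v ∉ l) : v ∈ G.reachAvoiding l v :=
  ⟨.nil, by simpa using hv⟩

lemma notMem_of_mem_reachAvoiding (hy : y ∈ G.reachAvoiding l v) : y ∉ l :=
  let ⟨p, hp⟩ := hy
  hp y p.end_mem_support

lemma mem_reachAvoiding_of_adj (hy : y ∈ G.reachAvoiding l v) (hz : z ∉ l) (hyz : G.Adj y z) :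
    z ∈ G.reachAvoiding l v :=
  let ⟨p, hp⟩ := hy
  ⟨p.concat hyz, fun w hw => by
    rcases List.mem_append.1 (Walk.support_concat p hyz ▸ hw) with hw | hw
    · exact hp w hw
    · exact List.mem_singleton.1 hw ▸ hz⟩

lemma exists_detour {h₁ h₂ : V} (h₁R : h₁ ∈ G.reachAvoiding l v)
    (h₂R : h₂ ∈ G.reachAvoiding l v) :
    ∃ D, G.IsListPath D ∧ D.head? = some h₁ ∧ D.getLast? = some h₂ ∧ ∀ x ∈ D, x ∉ l := by
  obtain ⟨p₁, hp₁⟩ := h₁R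
  obtain ⟨p₂, hp₂⟩ := h₂R
  obtain ⟨D, hD, hD₁, hD₂, hsub⟩ := (p₁.reverse.append p₂).exists_isListPath_subset_support
  refine ⟨D, hD, hD₁, hD₂, fun x hx => ?_⟩
  rcases List.mem_append.1 (Walk.support_append _ _ ▸ hsub hx) with hx | hx
  · exact hp₁ x (by simpa using hx)
  · exact hp₂ x (List.mem_of_mem_tail hx)

end reachAvoiding

lemma mem_of_reachable_induce {s R : Set V} (hR : ∀ x ∈ R, ∀ z ∈ s, G.Adj x z → z ∈ R)
    {x y : s} (h : (G.induce s).Reachable x y) (hx : x.1 ∈ R) : y.1 ∈ R := by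
  obtain ⟨p⟩ := h
  induction p with
  | nil => exact hx
  | cons hadj _ ih => exact ih (hR _ hx _ (Subtype.prop _) hadj)

open Classical in
variable (G) in
noncomputable def attachedIndices (l : List V) (R : Set V) : Finset (Fin (l.length - 1)) :=
  Finset.univ.filter fun i => ∃ h ∈ R, G.Adj l[i.1] h

lemma mem_attachedIndices {l : List V} {R : Set V} {i : Fin (l.length - 1)} :
    i ∈ G.attachedIndices l R ↔ ∃ h ∈ R, G.Adj l[i.1] h := by
  simp [attachedIndices]

namespace IsLongestListPath

variable {l : List V}

lemma reverse (hl : G.IsLongestListPath l) : G.IsLongestListPath l.reverse :=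
  ⟨hl.1.reverse, by simpa using hl.2⟩

lemma length_pos [Nonempty V] (hl : G.IsLongestListPath l) : 0 < l.length :=
  hl.2 [Classical.arbitrary V] (by simp [IsListPath])

lemma not_adj_getLast (hl : G.IsLongestListPath l) {b h : V} (hb : l.getLast? = some b)
    (hh : h ∉ l) : ¬ G.Adj b h := fun hbh => by
  have := hl.2 _ (IsListPath.rotate (q := []) (by simpa using hl.1) (by simpa) hb hbh.symm
    (by simp))
  simp at this

lemma not_adj_head (hl : G.IsLongestListPath l) {a h : V} (ha : l.head? = some a)
    (hh : h ∉ l) : ¬ G.Adj a h :=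
  hl.reverse.not_adj_getLast (by simpa using ha) (by simpa using hh)

lemma not_adj_succ (hl : G.IsLongestListPath l) {v h₁ h₂ : V} {i : ℕ}
    (hi : i + 1 < l.length) (h₁R : h₁ ∈ G.reachAvoiding l v) (h₂R : h₂ ∈ G.reachAvoiding l v)
    (hadj : G.Adj l[i] h₁) : ¬ G.Adj l[i + 1] h₂ := fun hadj' => by
  obtain ⟨D, hD, hD₁, hD₂, hDl⟩ := exists_detour h₁R h₂R
  have hsplit := (List.take_append_drop (i + 1) l).symm
  have hlong := hl.2 _ <| IsListPath.insert_detour (hsplit ▸ hl.1) hD hD₁ hD₂ (hsplit ▸ hDl)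
    (by simp [List.getLast?_take, show i < l.length by omega, hadj]) (by simp [hi, hadj'.symm])
  have := List.length_pos_of_mem (List.mem_of_mem_head? hD₁)
  simp only [List.length_append, List.length_take, List.length_drop] at hlong
  omega

lemma not_adj_head_succ (hl : G.IsLongestListPath l) {h : V} {i : ℕ}
    (hi : i + 1 < l.length) (hh : h ∉ l) (hadj : G.Adj l[i] h) : ¬ G.Adj l[0] l[i + 1] :=
  fun hadj' => by
  have hsplit := (List.take_append_drop (i + 1) l).symm
  have hlong := hl.2 _ <| IsListPath.rotate (hsplit ▸ hl.1) (hsplit ▸ hh)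
    (by simp [List.getLast?_take, show i < l.length by omega]) hadj.symm
    (by simp [List.head?_eq_getElem?, show 0 < l.length by omega, hi, hadj'])
  simp only [List.length_cons, List.length_append, List.length_reverse, List.length_take,
    List.length_drop] at hlong
  omega

lemma not_adj_succ_succ (hl : G.IsLongestListPath l) {v h₁ h₂ : V} {i j : ℕ}
    (hij : i < j) (hj : j + 1 < l.length) (h₁R : h₁ ∈ G.reachAvoiding l v)
    (h₂R : h₂ ∈ G.reachAvoiding l v) (hadj₁ : G.Adj l[i] h₁) (hadj₂ : G.Adj l[j] h₂) :
    ¬ G.Adj l[i + 1] l[j + 1] := fun hadj' => by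
  obtain ⟨D, hD, hD₁, hD₂, hDl⟩ := exists_detour h₁R h₂R
  have hsplit : l = l.take (i + 1) ++ (l.drop (i + 1)).take (j - i) ++ l.drop (j + 1) := by
    conv_lhs => rw [← List.take_append_drop (i + 1) l,
      ← List.take_append_drop (j - i) (l.drop (i + 1)), List.drop_drop,
      show i + 1 + (j - i) = j + 1 by omega]
    rw [List.append_assoc]
  have hlong := hl.2 _ <| IsListPath.cross_detour (hsplit ▸ hl.1) hD hD₁ hD₂
    (m₁ := l[i + 1]) (m₂ := l[j])
    (by simp [List.head?_take, show j - i ≠ 0 by omega, show i + 1 < l.length by omega])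
    (by simp [List.getLast?_take, show j - i ≠ 0 by omega, show i + 1 + (j - i - 1) = j by omega,
      show j < l.length by omega])
    (hsplit ▸ hDl) (by simp [List.getLast?_take, show i < l.length by omega, hadj₁]) hadj₂.symm
    (by simp [hj, hadj'])
  have := List.length_pos_of_mem (List.mem_of_mem_head? hD₁)
  simp only [List.length_append, List.length_take, List.length_drop, List.length_reverse] at hlong
  omega

lemma le_card_attachedIndices (hl : G.IsLongestListPath l) {v : V} (hv : v ∉ l) {k : ℕ}
    (hconn : ∀ s : Finset V, s.card < k → (G.induce {x | x ∉ s}).Connected) :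
    k ≤ (G.attachedIndices l (G.reachAvoiding l v)).card := by
  classical
  have : Nonempty V := ⟨v⟩
  set R := G.reachAvoiding l v
  by_contra! hlt
  set A := (G.attachedIndices l R).image fun i => l[i.1]
  have hA : ∀ u ∈ l, (∃ h ∈ R, G.Adj u h) → u ∈ A := by
    intro u hu ⟨h, hR, hadj⟩
    obtain ⟨m, hm, rfl⟩ := List.mem_iff_getElem.1 hu
    have : m ≠ l.length - 1 := by
      rintro rfl
      exact hl.not_adj_getLast (by simp [List.getLast?_eq_getElem?, hl.length_pos])
        (notMem_of_mem_reachAvoiding hR) hadj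
    exact Finset.mem_image.2 ⟨⟨m, by omega⟩, mem_attachedIndices.2 ⟨h, hR, hadj⟩, rfl⟩
  have hvA : v ∉ A := fun hvA => by
    obtain ⟨i, -, hi⟩ := Finset.mem_image.1 hvA
    exact hv (hi ▸ List.getElem_mem _)
  have hl₀A : l[0]'hl.length_pos ∉ A := fun hl₀A => by
    obtain ⟨i, hi, he⟩ := Finset.mem_image.1 hl₀A
    obtain ⟨h, hR, hadj⟩ := mem_attachedIndices.1 hi
    exact hl.not_adj_head (by simp [List.head?_eq_getElem?, hl.length_pos])
      (notMem_of_mem_reachAvoiding hR) (he ▸ hadj)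
  have hreach := (hconn A (Finset.card_image_le.trans_lt hlt)).preconnected ⟨v, hvA⟩ ⟨_, hl₀A⟩
  have hl₀R : l[0]'hl.length_pos ∈ R := by
    refine mem_of_reachable_induce (R := R) (fun x hx z hz hxz => ?_) hreach
      (self_mem_reachAvoiding hv)
    by_cases hzl : z ∈ l
    · exact absurd (hA z hzl ⟨x, hx, hxz.symm⟩) hz
    · exact mem_reachAvoiding_of_adj hx hzl hxz
  exact notMem_of_mem_reachAvoiding hl₀R (List.getElem_mem _)

lemma exists_isIndepSet (hl : G.IsLongestListPath l) {v : V} (hv : v ∉ l) :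
    ∃ s : Finset V, G.IsIndepSet (s : Set V) ∧
      s.card = (G.attachedIndices l (G.reachAvoiding l v)).card + 2 := by
  classical
  have : Nonempty V := ⟨v⟩
  set I := G.attachedIndices l (G.reachAvoiding l v)
  let succ : Fin (l.length - 1) → V := fun i => l[i.1 + 1]
  have hsucc : Function.Injective succ := fun i j h => by
    have := (hl.1.2.getElem_inj_iff).1 h; omega
  have hl₀ : l[0]'hl.length_pos ∉ I.image succ := by
    simp only [Finset.mem_image, not_exists, not_and]
    intro i _ h
    have := (hl.1.2.getElem_inj_iff).1 h; omega
  have hv' : v ∉ insert (l[0]'hl.length_pos) (I.image succ) := by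
    simp only [Finset.mem_insert, Finset.mem_image, not_or, not_exists, not_and]
    exact ⟨fun h => hv (h ▸ List.getElem_mem _), fun i _ h => hv (h ▸ List.getElem_mem _)⟩
  refine ⟨insert v (insert (l[0]'hl.length_pos) (I.image succ)), ?_, ?_⟩
  · simp only [Finset.coe_insert, Finset.coe_image, isIndepSet_insert, Set.mem_insert_iff,
      Set.mem_image, Finset.mem_coe]
    refine ⟨⟨?_, ?_⟩, ?_⟩
    · rintro _ ⟨i, hi, rfl⟩ _ ⟨j, hj, rfl⟩ hne
      obtain ⟨h₁, h₁R, hadj₁⟩ := mem_attachedIndices.1 hi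
      obtain ⟨h₂, h₂R, hadj₂⟩ := mem_attachedIndices.1 hj
      rcases lt_or_gt_of_ne (ne_of_apply_ne succ hne) with hij | hij
      · exact hl.not_adj_succ_succ hij (by omega) h₁R h₂R hadj₁ hadj₂
      · exact fun h => hl.not_adj_succ_succ hij (by omega) h₂R h₁R hadj₂ hadj₁ h.symm
    · rintro _ ⟨i, hi, rfl⟩ -
      obtain ⟨h, hR, hadj⟩ := mem_attachedIndices.1 hi
      exact hl.not_adj_head_succ (by omega) (notMem_of_mem_reachAvoiding hR) hadj
    · rintro _ (rfl | ⟨i, hi, rfl⟩) - h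
      · exact hl.not_adj_head (by simp [List.head?_eq_getElem?, hl.length_pos]) hv h.symm
      · obtain ⟨h₁, h₁R, hadj⟩ := mem_attachedIndices.1 hi
        exact hl.not_adj_succ (by omega) h₁R (self_mem_reachAvoiding hv) hadj h.symm
  · rw [Finset.card_insert_of_notMem hv', Finset.card_insert_of_notMem hl₀,
      Finset.card_image_of_injective _ hsucc]

lemma mem_of_indepNumber_le [Fintype V] (hl : G.IsLongestListPath l) {k : ℕ}
    (hconn : ∀ s : Finset V, s.card < k → (G.induce {x | x ∉ s}).Connected)
    (hα : G.indepNumber ≤ k + 1) (v : V) : v ∈ l := by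
  by_contra hv
  obtain ⟨s, hs, hcard⟩ := hl.exists_isIndepSet hv
  have := hl.le_card_attachedIndices hv hconn
  have := card_le_indepNumber hs
  omega

end IsLongestListPath

end SimpleGraph

/-- If `G` has at least one vertex and `α(G) ≤ κ(G) + 1`, then `G` has a Hamilton path. -/
theorem chvatal_erdos_hamilton_path {V : Type*} [Fintype V] [DecidableEq V] (G : SimpleGraph V)
    (hV : 1 ≤ Fintype.card V)
    (h : G.indepNumber ≤ G.vertexConnectivity + 1) :
    ∃ (u v : V) (p : G.Walk u v), p.IsHamiltonian := by
  have : Nonempty V := Fintype.card_pos_iff.1 hV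
  obtain ⟨l, hl⟩ := G.exists_isLongestListPath
  exact hl.1.exists_isHamiltonian (List.ne_nil_of_length_pos hl.length_pos)
    (hl.mem_of_indepNumber_le G.isKConnected_vertexConnectivity.2 h)
end

section
/- For integers k ≥ 1 and a > 2k, the prism over the complete bipartite graph K_{k,a} is not Hamiltonian; that is, K_{k,a} □ K₂ has no Hamiltonian cycle. -/
open SimpleGraph

section Aux

variable {k a : ℕ}

/-- The "partner" of a vertex in the prism: same base vertex, other layer. -/
private def prPartner (v : (Fin k ⊕ Fin a) × Fin 2) : (Fin k ⊕ Fin a) × Fin 2 :=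
  (v.1, v.2 + 1)

private lemma prPartner_ne (v : (Fin k ⊕ Fin a) × Fin 2) : prPartner v ≠ v := by
  intro h
  have h2 : v.2 + 1 = v.2 := congrArg Prod.snd h
  revert h2
  have : ∀ t : Fin 2, t + 1 ≠ t := by decide
  exact this v.2

private lemma prPartner_involutive (v : (Fin k ⊕ Fin a) × Fin 2) :
    prPartner (prPartner v) = v := by
  unfold prPartner
  have : ∀ t : Fin 2, t + 1 + 1 = t := by decide
  simp [this v.2]

private lemma prPartner_injective :
    Function.Injective (prPartner (k := k) (a := a)) := by
  intro u v h
  have := congrArg prPartner h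
  rwa [prPartner_involutive, prPartner_involutive] at this

/-- If two adjacent vertices of the prism are both on the big side, they are partners. -/
private lemma adj_big_big {u v : (Fin k ⊕ Fin a) × Fin 2}
    (h : (completeBipartiteGraph (Fin k) (Fin a) □ (⊤ : SimpleGraph (Fin 2))).Adj u v)
    (hu : u.1.isRight) (hv : v.1.isRight) : v = prPartner u := by
  obtain ⟨x₁, t₁⟩ := u
  obtain ⟨x₂, t₂⟩ := v
  obtain ⟨j₁, rfl⟩ := Sum.isRight_iff.mp hu
  obtain ⟨j₂, rfl⟩ := Sum.isRight_iff.mp hv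
  rw [boxProd_adj] at h
  rcases h with ⟨hadj, _⟩ | ⟨h1, h2⟩
  · simp [completeBipartiteGraph_adj] at hadj
  · have hne : t₁ ≠ t₂ := by simpa using h1
    have ht : t₂ = t₁ + 1 := by
      revert hne
      have : ∀ s t : Fin 2, s ≠ t → t = s + 1 := by decide
      exact this t₁ t₂
    unfold prPartner
    simp only [Prod.mk.injEq]
    exact ⟨h2.symm, ht⟩

private lemma card_filter_isRight :
    ((Finset.univ : Finset ((Fin k ⊕ Fin a) × Fin 2)).filter fun v => v.1.isRight).card
      = 2 * a := by
  have h1 : ((Finset.univ : Finset ((Fin k ⊕ Fin a) × Fin 2)).filter fun v => v.1.isRight)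
      = ((Finset.univ : Finset (Fin k ⊕ Fin a)).filter fun x => x.isRight) ×ˢ
        (Finset.univ : Finset (Fin 2)) := by
    ext ⟨x, t⟩
    simp [Finset.mem_product]
  have h2 : ((Finset.univ : Finset (Fin k ⊕ Fin a)).filter fun x => x.isRight)
      = Finset.univ.image Sum.inr := by
    ext x
    simp only [Finset.mem_filter, Finset.mem_univ, true_and, Finset.mem_image]
    constructor
    · intro h
      obtain ⟨b, hb⟩ := Sum.isRight_iff.mp h
      exact ⟨b, hb.symm⟩
    · rintro ⟨b, rfl⟩
      rfl
  rw [h1, Finset.card_product, h2,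
    Finset.card_image_of_injective _ Sum.inr_injective]
  simp only [Finset.card_univ, Fintype.card_fin]
  omega

private lemma card_filter_not_isRight :
    ((Finset.univ : Finset ((Fin k ⊕ Fin a) × Fin 2)).filter fun v => ¬ v.1.isRight).card
      = 2 * k := by
  have h1 : ((Finset.univ : Finset ((Fin k ⊕ Fin a) × Fin 2)).filter fun v => ¬ v.1.isRight)
      = ((Finset.univ : Finset (Fin k ⊕ Fin a)).filter fun x => ¬ x.isRight) ×ˢ
        (Finset.univ : Finset (Fin 2)) := by
    ext ⟨x, t⟩
    simp [Finset.mem_product]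
  have h2 : ((Finset.univ : Finset (Fin k ⊕ Fin a)).filter fun x => ¬ x.isRight)
      = Finset.univ.image Sum.inl := by
    ext x
    simp only [Finset.mem_filter, Finset.mem_univ, true_and, Finset.mem_image]
    constructor
    · intro h
      have hL : x.isLeft := by
        cases x with
        | inl y => rfl
        | inr y => exact absurd rfl h
      obtain ⟨b, hb⟩ := Sum.isLeft_iff.mp hL
      exact ⟨b, hb.symm⟩
    · rintro ⟨b, rfl⟩
      simp
  rw [h1, Finset.card_product, h2,
    Finset.card_image_of_injective _ Sum.inl_injective]
  simp only [Finset.card_univ, Fintype.card_fin]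
  omega

end Aux

/-- For `k ≥ 1` and `a > 2k`, the prism over the complete bipartite graph `K_{k,a}`
is not Hamiltonian. -/
theorem completeBipartite_prism_not_hamiltonian (k a : ℕ) (hk : 1 ≤ k) (ha : 2 * k < a) :
    ¬ (completeBipartiteGraph (Fin k) (Fin a) □ (⊤ : SimpleGraph (Fin 2))).IsHamiltonian := by
  set G := completeBipartiteGraph (Fin k) (Fin a) □ (⊤ : SimpleGraph (Fin 2)) with hG
  intro hham
  have hcard : Fintype.card ((Fin k ⊕ Fin a) × Fin 2) ≠ 1 := by
    simp only [Fintype.card_prod, Fintype.card_sum, Fintype.card_fin]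
    omega
  obtain ⟨v₀, p, hp⟩ := hham hcard
  -- the darts of the cycle, as a multiset
  set D : Multiset G.Dart := (p.darts : Multiset G.Dart) with hD
  have hsupcount : ∀ v, Multiset.count v (↑p.support : Multiset ((Fin k ⊕ Fin a) × Fin 2))
      = if v = v₀ then 2 else 1 := by
    intro v
    rw [Multiset.coe_count]
    by_cases h : v = v₀
    · rw [if_pos h]; subst h; exact hp.count_support_self
    · rw [if_neg h]; exact hp.support_count_of_ne (Ne.symm h)
  -- the multiset of first (resp. second) coordinates of darts is the whole vertex set
  have hfst : D.map (·.fst) = (Finset.univ : Finset ((Fin k ⊕ Fin a) × Fin 2)).val := by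
    apply Multiset.ext.2
    intro v
    have hmem : v ∈ (Finset.univ : Finset ((Fin k ⊕ Fin a) × Fin 2)).val := Finset.mem_univ v
    rw [Multiset.count_eq_one_of_mem Finset.univ.nodup hmem]
    have h1 : (↑(p.darts.map (·.fst)) : Multiset ((Fin k ⊕ Fin a) × Fin 2)) + ↑[v₀]
        = (↑p.support : Multiset ((Fin k ⊕ Fin a) × Fin 2)) := by
      rw [Multiset.coe_add]
      exact congrArg _ (SimpleGraph.Walk.map_fst_darts_append p)
    have h2 := congrArg (Multiset.count v) h1
    rw [Multiset.count_add, hsupcount v] at h2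
    have hD' : Multiset.count v (D.map (·.fst))
        = Multiset.count v (↑(p.darts.map (·.fst)) : Multiset ((Fin k ⊕ Fin a) × Fin 2)) := by
      rw [hD, Multiset.map_coe]
    rw [hD']
    by_cases h : v = v₀
    · rw [if_pos h] at h2
      subst h
      simp only [Multiset.coe_singleton, Multiset.count_singleton_self] at h2
      omega
    · rw [if_neg h] at h2
      simp only [Multiset.coe_singleton, Multiset.count_singleton, if_neg h] at h2
      omega
  have hsnd : D.map (·.snd) = (Finset.univ : Finset ((Fin k ⊕ Fin a) × Fin 2)).val := by
    apply Multiset.ext.2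
    intro v
    have hmem : v ∈ (Finset.univ : Finset ((Fin k ⊕ Fin a) × Fin 2)).val := Finset.mem_univ v
    rw [Multiset.count_eq_one_of_mem Finset.univ.nodup hmem]
    have h1 : (↑p.support : Multiset ((Fin k ⊕ Fin a) × Fin 2))
        = v₀ ::ₘ (↑p.support.tail : Multiset ((Fin k ⊕ Fin a) × Fin 2)) := by
      rw [Multiset.cons_coe]
      exact congrArg _ (SimpleGraph.Walk.support_eq_cons p)
    have h2 := congrArg (Multiset.count v) h1
    rw [hsupcount v, Multiset.count_cons] at h2
    have hD' : Multiset.count v (D.map (·.snd))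
        = Multiset.count v (↑p.support.tail : Multiset ((Fin k ⊕ Fin a) × Fin 2)) := by
      rw [hD, Multiset.map_coe, SimpleGraph.Walk.map_snd_darts]
    rw [hD']
    by_cases h : v = v₀
    · rw [if_pos h] at h2
      rw [if_pos h] at h2
      omega
    · rw [if_neg h] at h2
      rw [if_neg h] at h2
      omega
  -- counting over fst / snd
  have hcount_fst : ∀ (q : (Fin k ⊕ Fin a) × Fin 2 → Prop) [DecidablePred q],
      D.countP (fun d => q d.fst) = (Finset.univ.filter q).card := by
    intro q _
    have h1 : (D.map (·.fst)).countP q = D.countP (fun d => q d.fst) := by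
      rw [Multiset.countP_map, Multiset.countP_eq_card_filter]
    rw [← h1, hfst, Multiset.countP_eq_card_filter]
    rfl
  have hcount_snd : ∀ (q : (Fin k ⊕ Fin a) × Fin 2 → Prop) [DecidablePred q],
      D.countP (fun d => q d.snd) = (Finset.univ.filter q).card := by
    intro q _
    have h1 : (D.map (·.snd)).countP q = D.countP (fun d => q d.snd) := by
      rw [Multiset.countP_map, Multiset.countP_eq_card_filter]
    rw [← h1, hsnd, Multiset.countP_eq_card_filter]
    rfl
  -- total count of darts starting at a big vertex
  have htotal : D.countP (fun d => d.fst.1.isRight) = 2 * a := by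
    rw [hcount_fst (fun v => v.1.isRight)]
    exact card_filter_isRight
  -- split according to whether the dart ends at a big vertex
  have hsplit : D.countP (fun d => d.fst.1.isRight)
      = D.countP (fun d => (d.fst.1.isRight : Prop) ∧ (d.snd.1.isRight : Prop))
        + D.countP (fun d => (d.fst.1.isRight : Prop) ∧ ¬ (d.snd.1.isRight : Prop)) := by
    rw [Multiset.countP_eq_countP_filter_add _ _ (fun d => (d.snd.1.isRight : Prop))]
    rw [Multiset.countP_filter, Multiset.countP_filter]
  -- bound for big-to-small darts
  have hbs : D.countP (fun d => (d.fst.1.isRight : Prop) ∧ ¬ (d.snd.1.isRight : Prop))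
      ≤ 2 * k := by
    have hmono : D.countP (fun d => (d.fst.1.isRight : Prop) ∧ ¬ (d.snd.1.isRight : Prop))
        ≤ D.countP (fun d => ¬ (d.snd.1.isRight : Prop)) := by
      rw [Multiset.countP_eq_card_filter, Multiset.countP_eq_card_filter]
      exact Multiset.card_le_card
        (Multiset.monotone_filter_right D (fun d hd => hd.2))
    refine hmono.trans ?_
    rw [hcount_snd (fun v => ¬ v.1.isRight)]
    exact le_of_eq card_filter_not_isRight
  -- bound for big-to-big darts
  have hbb : D.countP (fun d => (d.fst.1.isRight : Prop) ∧ (d.snd.1.isRight : Prop)) ≤ a := by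
    set B : Multiset ((Fin k ⊕ Fin a) × Fin 2) :=
      (D.filter (fun d => (d.fst.1.isRight : Prop) ∧ (d.snd.1.isRight : Prop))).map (·.fst)
      with hB
    have hBle : B ≤ D.map (·.fst) := Multiset.map_le_map (Multiset.filter_le _ _)
    have hBnodup : B.Nodup := by
      have hnd : (D.map (·.fst)).Nodup := by rw [hfst]; exact Finset.univ.nodup
      exact Multiset.nodup_of_le hBle hnd
    have hBcard : B.card
        = D.countP (fun d => (d.fst.1.isRight : Prop) ∧ (d.snd.1.isRight : Prop)) := by
      rw [hB, Multiset.card_map, Multiset.countP_eq_card_filter]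
    set Bf : Finset ((Fin k ⊕ Fin a) × Fin 2) := ⟨B, hBnodup⟩ with hBf
    have hmemB : ∀ v ∈ Bf, ∃ d ∈ p.darts,
        ((d.fst.1.isRight : Prop) ∧ (d.snd.1.isRight : Prop)) ∧ d.fst = v := by
      intro v hv
      have hv' : v ∈ B := hv
      rw [hB, Multiset.mem_map] at hv'
      obtain ⟨d, hd, hdv⟩ := hv'
      rw [Multiset.mem_filter] at hd
      have hdmem : d ∈ p.darts := by
        have h := hd.1
        rwa [hD, Multiset.mem_coe] at h
      exact ⟨d, hdmem, hd.2, hdv⟩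
    -- Bf and its partner image are disjoint
    have hdisj : ∀ v ∈ Bf, prPartner v ∉ Bf := by
      intro v hv hpv
      obtain ⟨d, hdmem, ⟨hd1, hd2⟩, hdfst⟩ := hmemB v hv
      obtain ⟨d', hdmem', ⟨hd1', hd2'⟩, hdfst'⟩ := hmemB (prPartner v) hpv
      have hdsnd : d.snd = prPartner v := by
        rw [← hdfst]; exact adj_big_big d.adj hd1 hd2
      have hdsnd' : d'.snd = v := by
        have h := adj_big_big d'.adj hd1' hd2'
        rw [hdfst', prPartner_involutive] at h
        exact h
      have hedge : d.edge = d'.edge := by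
        unfold SimpleGraph.Dart.edge
        rw [Sym2.eq_iff]
        right
        constructor
        · rw [hdfst, ← hdsnd']
        · rw [hdsnd, ← hdfst']
      have hednd : (p.darts.map SimpleGraph.Dart.edge).Nodup := hp.isCycle.edges_nodup
      have hinj := List.inj_on_of_nodup_map hednd
      have hdd' : d = d' := hinj hdmem hdmem' hedge
      have hvv : prPartner v = v := by rw [← hdfst', ← hdd']; exact hdfst
      exact prPartner_ne v hvv
    have hsubset : Bf ⊆ Finset.univ.filter (fun v => v.1.isRight) := by
      intro v hv
      obtain ⟨d, _, ⟨hd1, _⟩, hdfst⟩ := hmemB v hv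
      rw [Finset.mem_filter]
      exact ⟨Finset.mem_univ v, hdfst ▸ hd1⟩
    have hsubset' : Bf.image prPartner ⊆ Finset.univ.filter (fun v => v.1.isRight) := by
      intro w hw
      rw [Finset.mem_image] at hw
      obtain ⟨v, hv, rfl⟩ := hw
      have h := hsubset hv
      rw [Finset.mem_filter] at h ⊢
      exact ⟨Finset.mem_univ _, h.2⟩
    have hdisj2 : Disjoint Bf (Bf.image prPartner) := by
      rw [Finset.disjoint_right]
      intro w hw hw'
      rw [Finset.mem_image] at hw
      obtain ⟨v, hv, rfl⟩ := hw
      exact hdisj v hv hw'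
    have hunion : (Bf ∪ Bf.image prPartner).card ≤ 2 * a := by
      calc (Bf ∪ Bf.image prPartner).card
          ≤ (Finset.univ.filter (fun v : (Fin k ⊕ Fin a) × Fin 2 => v.1.isRight)).card :=
            Finset.card_le_card (Finset.union_subset hsubset hsubset')
        _ = 2 * a := card_filter_isRight
    rw [Finset.card_union_of_disjoint hdisj2,
      Finset.card_image_of_injective _ prPartner_injective] at hunion
    have hBfcard : Bf.card = B.card := rfl
    omega
  omega
end

section
/- Let G be a simple graph whose vertex set is the disjoint union of V(P₁) and V(P₂), where P₁ and P₂ are vertex-disjoint paths of G. Let a₁, a₂ be distinct vertices of P₁ with a₁ occurring before a₂ along P₁, and let b₁, b₂ be distinct vertices of P₂ with b₁ occurring before b₂ along P₂, such that a₁b₁ ∈ E(G) and a₂b₂ ∈ E(G). If the subpaths P₁[a₁,a₂] and P₂[b₁,b₂] have orders (numbers of vertices) of the same parity, then the prism over G is Hamiltonian, i.e. G □ K₂ has a Hamiltonian cycle. -/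
/-!
The Hamiltonian cycle of the prism runs through the layers `V × {0}` and `V × {1}` as follows.
From `(a₁, 0)` it goes out along `P₁[s₁, a₁]` in one layer and comes back in the other (a
"ladder"), zigzags along `P₁[a₁, a₂]` switching layers at every interior vertex, takes a ladder
along `P₁[a₂, t₁]`, crosses the edge `a₂b₂`, and does the same along `P₂` from `b₂` back to `b₁`.
Each of the two passes changes the layer by the order of the segment `P₁[a₁, a₂]` resp.
`P₂[b₁, b₂]`, so by the parity hypothesis the walk returns to layer `0` at `b₁`, and the edge
`b₁a₁` closes it.
-/

open SimpleGraph Fin.NatCast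

theorem List.map_append_map_perm_product {α β : Type*} (l : List α) (b₁ b₂ : β) :
    (l.map (·, b₁) ++ l.map (·, b₂)).Perm (l ×ˢ [b₁, b₂]) := by
  induction l with
  | nil => rfl
  | cons a l ih =>
    simp only [List.map_cons, List.cons_append, List.product_cons, List.map_nil, List.nil_append]
    exact .cons _ (List.perm_middle.trans (.cons _ ih))

theorem List.append_product {α β : Type*} (l₁ l₂ : List α) (t : List β) :
    (l₁ ++ l₂) ×ˢ t = l₁ ×ˢ t ++ l₂ ×ˢ t := by
  induction l₁ with
  | nil => rfl
  | cons a l ih => simp [ih]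

theorem Fin.pair_add_one_perm (ε : Fin 2) : [ε, ε + 1].Perm [0, 1] := by
  fin_cases ε
  exacts [.refl _, .swap _ _ _]

namespace SimpleGraph

variable {V : Type*} {G : SimpleGraph V}

abbrev prism (G : SimpleGraph V) : SimpleGraph (V × Fin 2) :=
  G □ (⊤ : SimpleGraph (Fin 2))

theorem prism_adj_add_one (v : V) (ε : Fin 2) : G.prism.Adj (v, ε) (v, ε + 1) :=
  boxProd_adj_right.2 <| (top_adj _ _).2 (by simp)

namespace Walk

theorem support_boxProdLeft {β : Type*} (H : SimpleGraph β) {u v : V} (b : β)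
    (w : G.Walk u v) : (w.boxProdLeft H b).support = w.support.map (·, b) :=
  support_map _ _

theorem IsHamiltonian.isHamiltonianCycle_cons [DecidableEq V] {u v : V} {p : G.Walk v u}
    (hp : p.IsHamiltonian) (h : G.Adj u v) (hlen : p.length ≠ 1) :
    (cons h p).IsHamiltonianCycle := by
  refine ⟨(cons_isCycle_iff p h).2 ⟨hp.isPath, fun he => hlen ?_⟩, ?_⟩
  · exact hp.isPath.length_eq_one_of_mem_edges (Sym2.eq_swap ▸ he)
  · rw [tail_cons]
    exact fun z => by simpa [support_copy] using hp z

theorem isHamiltonian_of_perm [DecidableEq V] {u v : V} {p : G.Walk u v} {l : List V}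
    (hp : p.support.Perm l) (hl : l.Nodup) (hmem : ∀ x, x ∈ l) : p.IsHamiltonian :=
  fun x => (hp.count_eq x).trans (List.count_eq_one_of_mem hl (hmem x))

theorem idxOf_support_append_of_notMem [DecidableEq V] {u v w x : V} (p : G.Walk u v)
    (q : G.Walk v w) (hx : x ∉ p.support) :
    (p.append q).support.idxOf x = p.length + q.support.idxOf x := by
  have hvx : v ≠ x := fun h => hx (h ▸ p.end_mem_support)
  rw [support_append, List.idxOf_append_of_notMem hx, length_support]
  cases q with
  | nil => simp [hvx]
  | cons _ q => simp [List.idxOf_cons_ne _ hvx]; omega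

theorem exists_eq_append_append_of_idxOf_lt [DecidableEq V] {s t a a' : V} (P : G.Walk s t)
    (ha : a ∈ P.support) (ha' : a' ∈ P.support)
    (h : P.support.idxOf a < P.support.idxOf a') :
    ∃ (S : G.Walk s a) (M : G.Walk a a') (T : G.Walk a' t),
      M.length = P.support.idxOf a' - P.support.idxOf a ∧ P = S.append (M.append T) := by
  set S := P.takeUntil a ha
  set D := P.dropUntil a ha
  have hP : P = S.append D := (P.take_spec ha).symm
  have hS : S.length = P.support.idxOf a := P.length_takeUntil ha
  have ha'S : a' ∉ S.support := fun hmem => by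
    have hidx : P.support.idxOf a' = S.support.idxOf a' := by
      rw [hP, support_append]; exact List.idxOf_append_of_mem hmem
    have := List.idxOf_lt_length_of_mem hmem
    rw [length_support] at this
    omega
  have ha'D : a' ∈ D.support := by
    rw [hP, mem_support_append_iff] at ha'
    exact ha'.resolve_left ha'S
  have hidx : P.support.idxOf a' = S.length + D.support.idxOf a' := by
    rw [hP]; exact idxOf_support_append_of_notMem S D ha'S
  refine ⟨S, D.takeUntil a' ha'D, D.dropUntil a' ha'D, ?_, by rw [take_spec]; exact hP⟩
  rw [length_takeUntil]
  omega

/-! Coverage is recorded as `W.support ~ l ×ˢ [0, 1]`: the prism walk `W` visits both copies of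
every vertex of `l`, each as often as `l` does. -/

theorem exists_prism_ladder {u v : V} (w : G.Walk u v) (ε : Fin 2) :
    ∃ W : G.prism.Walk (u, ε) (u, ε + 1), W.support.Perm (w.support ×ˢ [0, 1]) := by
  refine ⟨(w.boxProdLeft _ ε).append
    (cons (prism_adj_add_one v ε) (w.reverse.boxProdLeft _ (ε + 1))), ?_⟩
  rw [support_append, support_cons, List.tail_cons, support_boxProdLeft, support_boxProdLeft,
    support_reverse, List.map_reverse]
  exact ((List.reverse_perm _).append_left _).trans
    ((List.map_append_map_perm_product _ _ _).trans ((Fin.pair_add_one_perm ε).product_left _))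

theorem exists_prism_comb {u v t : V} (M : G.Walk u v) (T : G.Walk v t) (ε : Fin 2) :
    ∃ W : G.prism.Walk (u, ε) (v, ε + ((M.length + 1 : ℕ) : Fin 2)),
      W.support.Perm ((M.append T).support ×ˢ [0, 1]) := by
  induction M generalizing ε with
  | nil =>
    obtain ⟨W, hW⟩ := exists_prism_ladder T ε
    exact ⟨W.copy rfl (by simp), by simpa using hW⟩
  | cons h M ih =>
    obtain ⟨W, hW⟩ := ih T (ε + 1)
    refine ⟨(cons (prism_adj_add_one _ ε) (cons (boxProd_adj_left.2 h) W)).copy rfl ?_, ?_⟩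
    · rw [length_cons]
      congr 1
      push_cast
      abel
    · rw [support_copy, support_cons, support_cons, cons_append, support_cons, List.product_cons]
      exact ((Fin.pair_add_one_perm ε).map _).append hW

theorem exists_prism_walk_append_append {s u v t : V} (S : G.Walk s u) (M : G.Walk u v)
    (T : G.Walk v t) (huv : u ≠ v) (ε : Fin 2) :
    ∃ W : G.prism.Walk (u, ε) (v, ε + ((M.length + 1 : ℕ) : Fin 2)),
      W.support.Perm ((S.append (M.append T)).support ×ˢ [0, 1]) := by
  cases M with
  | nil => exact absurd rfl huv
  | cons h M =>
    obtain ⟨L, hL⟩ := exists_prism_ladder S.reverse ε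
    obtain ⟨C, hC⟩ := exists_prism_comb M T (ε + 1)
    refine ⟨(L.append (cons (boxProd_adj_left.2 h) C)).copy rfl ?_, ?_⟩
    · rw [length_cons]
      congr 1
      push_cast
      abel
    · rw [support_copy, support_append, support_cons, List.tail_cons, support_append, cons_append,
        support_cons, List.tail_cons, List.append_product]
      refine (hL.trans ?_).append hC
      rw [support_reverse]
      exact (List.reverse_perm _).product_right _

theorem exists_prism_walk_of_idxOf_lt [DecidableEq V] {s t a a' : V} (P : G.Walk s t)
    (ha : a ∈ P.support) (ha' : a' ∈ P.support) (h : P.support.idxOf a < P.support.idxOf a')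
    (ε : Fin 2) :
    ∃ W : G.prism.Walk (a, ε)
        (a', ε + ((P.support.idxOf a' - P.support.idxOf a + 1 : ℕ) : Fin 2)),
      W.support.Perm (P.support ×ˢ [0, 1]) := by
  obtain ⟨S, M, T, hM, rfl⟩ := P.exists_eq_append_append_of_idxOf_lt ha ha' h
  rw [← hM]
  exact exists_prism_walk_append_append S M T (by rintro rfl; exact lt_irrefl _ h) ε

end Walk

end SimpleGraph

/-- Suppose the vertex set of `G` is the disjoint union of two vertex-disjoint paths
`P₁` and `P₂`, with vertices `a₁` before `a₂` on `P₁` and `b₁` before `b₂` on `P₂`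
(positions along a path are measured by `List.indexOf` in its support),
such that `a₁b₁, a₂b₂ ∈ E(G)`.  If the subpaths `P₁[a₁,a₂]` and `P₂[b₁,b₂]` have orders
of the same parity (equivalently, the index differences have the same parity), then the
prism `G □ K₂` is Hamiltonian. -/
theorem prism_hamiltonian_of_same_parity {V : Type*} [Fintype V] [DecidableEq V]
    (G : SimpleGraph V) {s₁ t₁ s₂ t₂ : V}
    (P₁ : G.Walk s₁ t₁) (P₂ : G.Walk s₂ t₂) (hP₁ : P₁.IsPath) (hP₂ : P₂.IsPath)
    (hdisj : ∀ x, x ∈ P₁.support → x ∉ P₂.support)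
    (hcover : ∀ x : V, x ∈ P₁.support ∨ x ∈ P₂.support)
    (a₁ a₂ b₁ b₂ : V)
    (ha₁ : a₁ ∈ P₁.support) (ha₂ : a₂ ∈ P₁.support)
    (hb₁ : b₁ ∈ P₂.support) (hb₂ : b₂ ∈ P₂.support)
    (ha : P₁.support.idxOf a₁ < P₁.support.idxOf a₂)
    (hb : P₂.support.idxOf b₁ < P₂.support.idxOf b₂)
    (hab₁ : G.Adj a₁ b₁) (hab₂ : G.Adj a₂ b₂)
    (hpar : (P₁.support.idxOf a₂ - P₁.support.idxOf a₁ + 1) % 2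
          = (P₂.support.idxOf b₂ - P₂.support.idxOf b₁ + 1) % 2) :
    (G □ (⊤ : SimpleGraph (Fin 2))).IsHamiltonian := by
  obtain ⟨W₁, hW₁⟩ := P₁.exists_prism_walk_of_idxOf_lt ha₁ ha₂ ha 0
  obtain ⟨W₂, hW₂⟩ := P₂.exists_prism_walk_of_idxOf_lt hb₁ hb₂ hb 0
  have hlayer : (0 : Fin 2) + ((P₂.support.idxOf b₂ - P₂.support.idxOf b₁ + 1 : ℕ) : Fin 2)
      = 0 + ((P₁.support.idxOf a₂ - P₁.support.idxOf a₁ + 1 : ℕ) : Fin 2) := by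
    simp only [zero_add, Fin.ext_iff, Fin.val_natCast, hpar]
  let W := W₁.append (.cons (boxProd_adj_left.2 hab₂) (W₂.reverse.copy (by rw [hlayer]) rfl))
  have hW : W.support.Perm ((P₁.support ++ P₂.support) ×ˢ [0, 1]) := by
    rw [Walk.support_append, Walk.support_cons, List.tail_cons, Walk.support_copy,
      Walk.support_reverse, List.append_product]
    exact hW₁.append ((List.reverse_perm _).trans hW₂)
  have hnodup : (P₁.support ++ P₂.support).Nodup :=
    List.nodup_append.2 ⟨hP₁.support_nodup, hP₂.support_nodup,
      fun x hx y hy hxy => hdisj x hx (hxy ▸ hy)⟩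
  have hWham : W.IsHamiltonian := Walk.isHamiltonian_of_perm hW (hnodup.product (by decide))
    fun ⟨x, δ⟩ => List.mem_product.2 ⟨List.mem_append.2 (hcover x), by fin_cases δ <;> simp⟩
  have hne : a₁ ≠ a₂ := fun h => by simp [h] at ha
  have hlen : W.length ≠ 1 := by
    have : W₁.length ≠ 0 := fun h => hne (congrArg Prod.fst (W₁.eq_of_length_eq_zero h))
    rw [Walk.length_append, Walk.length_cons]
    omega
  exact fun _ => ⟨_, _, hWham.isHamiltonianCycle_cons (boxProd_adj_left.2 hab₁.symm) hlen⟩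
end

section
/- Let G be a simple graph whose vertex set is the disjoint union of V(P₁) and V(P₂), where P₁ and P₂ are vertex-disjoint paths of G. Let a₁, a₂ be distinct vertices of P₁ with a₁ occurring before a₂ along P₁, and let b₁, b₂ be distinct vertices of P₂ with b₁ occurring before b₂ along P₂, such that a₁b₁ ∈ E(G) and a₂b₂ ∈ E(G), and suppose the subpaths P₁[a₁,a₂] and P₂[b₁,b₂] have orders of different parity. If there is an edge xy ∈ E(G) with x ∈ V(P₁) \ {a₁, a₂} and y ∈ V(P₂) \ {b₁, b₂}, then the prism over G is Hamiltonian, i.e. G □ K₂ has a Hamiltonian cycle. -/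
/-!
Let `(a, b)` be `(a₁, b₁)` or `(a₂, b₂)`. Going from `x` along `P₁` to `a`, across `ab`, along
`P₂` to `y` and back across `yx` gives a cycle `C`, and the rest of `P₁` and `P₂` hangs from `C`
as pendant paths. By the parity hypothesis the two choices give cycles of lengths of different
parity, so for one of them `C` is even. The prism over an even cycle with pendant paths is
Hamiltonian: at each vertex of `C` run out along its pendant path in one layer and back in the
other, then step to the next vertex of `C`; the layer flips once per vertex of `C`, so the tour
closes up.
-/

open SimpleGraph

namespace SimpleGraph

variable {V : Type*} {G : SimpleGraph V}

theorem isHamiltonian_of_isChain [Fintype V] [DecidableEq V] {l : List V} {u w : V}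
    (hchain : l.IsChain G.Adj) (hu : l.head? = some u) (hw : l.getLast? = some w) (hwu : G.Adj w u)
    (hnodup : l.Nodup) (hcover : ∀ v, v ∈ l) (hlen : 3 ≤ l.length) : G.IsHamiltonian := by
  have hne : l ≠ [] := by rintro rfl; simp at hu
  obtain ⟨p, hp⟩ : ∃ p : G.Walk u w, p.support = l :=
    ⟨(Walk.ofSupport l hne hchain).copy ((List.head_eq_iff_head?_eq_some hne).2 hu)
      ((List.getLast_eq_iff_getLast?_eq_some hne).2 hw), by simp⟩
  have htail : (Walk.cons hwu p).tail.support = l := by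
    rw [Walk.support_tail_of_not_nil _ Walk.not_nil_cons, Walk.support_cons, List.tail_cons, hp]
  refine fun _ ↦ ⟨w, .cons hwu p, ?_⟩
  rw [Walk.isHamiltonianCycle_isCycle_and_isHamiltonian_tail,
    Walk.isCycle_iff_isPath_tail_and_le_length, Walk.isPath_def, Walk.IsHamiltonian, htail,
    Walk.length_cons, ← Nat.succ_le_succ_iff, ← Walk.length_support, hp]
  exact ⟨⟨hnodup, by omega⟩, fun v ↦ List.count_eq_one_of_mem hnodup (hcover v)⟩

def combSupport (L : List (V × List V)) : List V := L.flatMap fun z ↦ z.1 :: z.2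

/-- `L` is a comb of `G` with spine from `u` to `w`: each `(r, t) ∈ L` stands for the tooth
`r :: t`, a path of `G` hanging from the spine vertex `r`, and the roots `r` form the spine. -/
structure IsComb (G : SimpleGraph V) (L : List (V × List V)) (u w : V) : Prop where
  head?_roots : (L.map Prod.fst).head? = some u
  getLast?_roots : (L.map Prod.fst).getLast? = some w
  isChain_roots : (L.map Prod.fst).IsChain G.Adj
  isChain_teeth : ∀ z ∈ L, (z.1 :: z.2).IsChain G.Adj

@[simp] lemma combSupport_cons (z : V × List V) (L : List (V × List V)) :
    combSupport (z :: L) = z.1 :: z.2 ++ combSupport L :=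
  rfl

lemma combSupport_append (L₁ L₂ : List (V × List V)) :
    combSupport (L₁ ++ L₂) = combSupport L₁ ++ combSupport L₂ :=
  List.flatMap_append

lemma combSupport_reverse_perm (L : List (V × List V)) :
    (combSupport L.reverse).Perm (combSupport L) :=
  L.reverse_perm.flatMap_right _

lemma length_le_length_combSupport (L : List (V × List V)) :
    L.length ≤ (combSupport L).length := by
  induction L with
  | nil => simp [combSupport]
  | cons z L ih =>
    simp only [combSupport_cons, List.length_append, List.length_cons]
    omega

namespace IsComb

variable {L L₁ L₂ : List (V × List V)} {u v v' w : V}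

lemma append (h₁ : G.IsComb L₁ u v) (h₂ : G.IsComb L₂ v' w) (hv : G.Adj v v') :
    G.IsComb (L₁ ++ L₂) u w where
  head?_roots := by simp [List.head?_append, h₁.head?_roots]
  getLast?_roots := by simp [List.getLast?_append, h₂.getLast?_roots]
  isChain_roots := by
    rw [List.map_append]
    exact h₁.isChain_roots.append h₂.isChain_roots (by simp [h₁.getLast?_roots, h₂.head?_roots, hv])
  isChain_teeth z hz := (List.mem_append.1 hz).elim (h₁.isChain_teeth z) (h₂.isChain_teeth z)

lemma reverse (h : G.IsComb L u w) : G.IsComb L.reverse w u where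
  head?_roots := by rw [List.map_reverse, List.head?_reverse, h.getLast?_roots]
  getLast?_roots := by rw [List.map_reverse, List.getLast?_reverse, h.head?_roots]
  isChain_roots := by
    rw [List.map_reverse, List.isChain_reverse]
    exact h.isChain_roots.imp fun _ _ hadj ↦ hadj.symm
  isChain_teeth z hz := h.isChain_teeth z (List.mem_reverse.1 hz)

end IsComb

def toothDetour (ε : Fin 2) (z : V × List V) : List (V × Fin 2) :=
  (z.1 :: z.2).map (·, ε) ++ ((z.1 :: z.2).map (·, ε + 1)).reverse

def combTour : Fin 2 → List (V × List V) → List (V × Fin 2)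
  | _, [] => []
  | ε, z :: L => toothDetour ε z ++ combTour (ε + 1) L

lemma _root_.Fin.two_eq_or_eq_add_one (ε δ : Fin 2) : δ = ε ∨ δ = ε + 1 := by decide +revert

lemma _root_.Fin.two_ne_add_one (ε : Fin 2) : ε ≠ ε + 1 := by decide +revert

section toothDetour

variable (ε : Fin 2) (z : V × List V)

@[simp] lemma head?_toothDetour : (toothDetour ε z).head? = some (z.1, ε) := by
  simp [toothDetour]

@[simp] lemma getLast?_toothDetour : (toothDetour ε z).getLast? = some (z.1, ε + 1) := by
  rw [toothDetour, List.getLast?_append_of_ne_nil _ (by simp), List.getLast?_reverse]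
  simp

lemma length_toothDetour : (toothDetour ε z).length = 2 * (z.1 :: z.2).length := by
  rw [toothDetour, List.length_append, List.length_reverse, List.length_map, List.length_map,
    two_mul]

@[simp] lemma mem_toothDetour {q : V × Fin 2} : q ∈ toothDetour ε z ↔ q.1 ∈ z.1 :: z.2 := by
  obtain ⟨v, δ⟩ := q
  rcases Fin.two_eq_or_eq_add_one ε δ with rfl | rfl <;> simp [toothDetour, or_comm]

lemma nodup_toothDetour (h : (z.1 :: z.2).Nodup) : (toothDetour ε z).Nodup := by
  have hinj (δ : Fin 2) : Function.Injective fun v : V ↦ (v, δ) := fun _ _ h ↦ congrArg Prod.fst h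
  refine List.nodup_append.2 ⟨h.map (hinj ε), List.nodup_reverse.2 (h.map (hinj (ε + 1))), ?_⟩
  simp only [List.mem_map, List.mem_reverse]
  rintro _ ⟨v, -, rfl⟩ _ ⟨w, -, rfl⟩ hvw
  exact Fin.two_ne_add_one ε (congrArg Prod.snd hvw)

lemma isChain_toothDetour (h : (z.1 :: z.2).IsChain G.Adj) :
    (toothDetour ε z).IsChain (G □ (⊤ : SimpleGraph (Fin 2))).Adj := by
  refine List.IsChain.append ?_ ?_ ?_
  · exact (List.isChain_map _).2 (h.imp fun _ _ ↦ boxProd_adj_left.2)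
  · exact List.isChain_reverse.2 <|
      (List.isChain_map _).2 (h.imp fun _ _ hab ↦ boxProd_adj_left.2 hab.symm)
  · rw [List.head?_reverse, List.getLast?_map, List.getLast?_map,
      List.getLast?_eq_some_getLast (List.cons_ne_nil _ _)]
    simp

end toothDetour

section combTour

open Fin.NatCast

lemma head?_combTour (ε : Fin 2) (L : List (V × List V)) :
    (combTour ε L).head? = L.head?.map fun z ↦ (z.1, ε) := by
  cases L <;> simp [combTour]

lemma combTour_append (ε : Fin 2) (L₁ L₂ : List (V × List V)) :
    combTour ε (L₁ ++ L₂) = combTour ε L₁ ++ combTour (ε + (L₁.length : Fin 2)) L₂ := by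
  induction L₁ generalizing ε with
  | nil => simp [combTour]
  | cons z L ih =>
    simp only [List.cons_append, combTour, ih, List.append_assoc, List.length_cons,
      Nat.cast_succ]
    abel_nf

lemma getLast?_combTour (ε : Fin 2) (L : List (V × List V)) :
    (combTour ε L).getLast? = L.getLast?.map fun z ↦ (z.1, ε + (L.length : Fin 2)) := by
  rcases L.eq_nil_or_concat with rfl | ⟨L, z, rfl⟩
  · rfl
  · simp [combTour_append, combTour, add_assoc]

lemma length_combTour (ε : Fin 2) (L : List (V × List V)) :
    (combTour ε L).length = 2 * (combSupport L).length := by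
  induction L generalizing ε with
  | nil => rfl
  | cons z L ih =>
    rw [combTour, List.length_append, length_toothDetour, ih, combSupport_cons,
      List.length_append, mul_add]

lemma mem_combTour {ε : Fin 2} {L : List (V × List V)} {q : V × Fin 2} :
    q ∈ combTour ε L ↔ q.1 ∈ combSupport L := by
  induction L generalizing ε with
  | nil => simp [combTour, combSupport]
  | cons z L ih => simp [combTour, ih, or_assoc]

lemma nodup_combTour (ε : Fin 2) {L : List (V × List V)} (h : (combSupport L).Nodup) :
    (combTour ε L).Nodup := by
  induction L generalizing ε with
  | nil => simp [combTour]
  | cons z L ih =>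
    rw [combSupport_cons, List.nodup_append] at h
    refine List.nodup_append.2 ⟨nodup_toothDetour ε z h.1, ih _ h.2.1, ?_⟩
    intro q hq q' hq'
    exact h.2.2 _ ((mem_toothDetour ε z).1 hq) _ (mem_combTour.1 hq') ∘ congrArg Prod.fst

lemma isChain_combTour (ε : Fin 2) {L : List (V × List V)}
    (hroots : (L.map Prod.fst).IsChain G.Adj) (hteeth : ∀ z ∈ L, (z.1 :: z.2).IsChain G.Adj) :
    (combTour ε L).IsChain (G □ (⊤ : SimpleGraph (Fin 2))).Adj := by
  induction L generalizing ε with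
  | nil => simp [combTour]
  | cons z L ih =>
    refine (isChain_toothDetour ε z (hteeth z List.mem_cons_self)).append
      (ih _ hroots.tail fun z' hz' ↦ hteeth z' (List.mem_cons_of_mem _ hz')) ?_
    rw [getLast?_toothDetour, head?_combTour]
    cases L with
    | nil => simp
    | cons z' L =>
      simp only [List.map_cons, List.isChain_cons_cons] at hroots
      simpa [boxProd_adj_left] using hroots.1

theorem IsComb.isHamiltonian_prism [Fintype V] [DecidableEq V] {L : List (V × List V)} {u w : V}
    (hL : G.IsComb L u w) (hwu : G.Adj w u) (heven : Even L.length)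
    (hnodup : (combSupport L).Nodup) (hcover : ∀ v, v ∈ combSupport L) :
    (G □ (⊤ : SimpleGraph (Fin 2))).IsHamiltonian := by
  have hlayer : (L.length : Fin 2) = 0 := Fin.natCast_eq_zero.2 heven.two_dvd
  have hlen : 2 ≤ L.length := by
    have hne : L ≠ [] := by rintro rfl; simpa using hL.head?_roots
    obtain ⟨k, hk⟩ := heven
    have := List.length_pos_iff.2 hne
    omega
  refine isHamiltonian_of_isChain (u := (u, 0)) (w := (w, 0))
    (isChain_combTour 0 hL.isChain_roots hL.isChain_teeth) ?_ ?_ (boxProd_adj_left.2 hwu)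
    (nodup_combTour 0 hnodup) (fun q ↦ mem_combTour.2 (hcover q.1)) ?_
  · simpa [head?_combTour] using hL.head?_roots
  · simpa [getLast?_combTour, hlayer] using hL.getLast?_roots
  · rw [length_combTour]
    have := length_le_length_combSupport L
    omega

end combTour

lemma _root_.List.exists_eq_append_cons_append_cons {α : Type*} {l : List α} {u w : α}
    (hu : u ∈ l) (hw : w ∈ l) (huw : u ≠ w) :
    (∃ X M Y, l = X ++ u :: (M ++ w :: Y)) ∨ ∃ X M Y, l = X ++ w :: (M ++ u :: Y) := by
  obtain ⟨X, T, rfl⟩ := List.append_of_mem hu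
  rcases List.mem_append.1 hw with hX | hT
  · obtain ⟨X', M, rfl⟩ := List.append_of_mem hX
    exact Or.inr ⟨X', M, T, by simp⟩
  · obtain ⟨M, Y, rfl⟩ := List.append_of_mem ((List.mem_cons.1 hT).resolve_left huw.symm)
    exact Or.inl ⟨X, M, Y, rfl⟩

lemma _root_.List.dist_idxOf_of_eq_append_cons_append_cons {α : Type*} [DecidableEq α]
    {l X M Y : List α} {u w : α} (hnd : l.Nodup) (hl : l = X ++ u :: (M ++ w :: Y)) :
    Nat.dist (l.idxOf u) (l.idxOf w) = M.length + 1 := by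
  subst hl
  simp only [List.nodup_append, List.nodup_cons, List.mem_cons, List.mem_append] at hnd
  grind [List.idxOf_append_of_notMem, List.idxOf_cons_ne, List.idxOf_cons_self, Nat.dist]

/-- The vertices strictly between `u` and `w` form the rest of the spine, without teeth;
the two ends `X` and `Y` of `l` hang from `u` and `w`. -/
lemma exists_isComb_of_eq_append {l X M Y : List V} {u w : V} (hl : l.IsChain G.Adj)
    (heq : l = X ++ u :: (M ++ w :: Y)) :
    ∃ L, G.IsComb L u w ∧ (combSupport L).Perm l ∧ L.length = M.length + 2 := by
  subst heq
  refine ⟨(u, X.reverse) :: (M.map (·, []) ++ [(w, Y)]),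
    ⟨by simp, by simp [Function.comp_def, List.getLast?_cons], ?_, ?_⟩, ?_, by simp⟩
  · have : u :: (M ++ [w]) <:+: X ++ u :: (M ++ w :: Y) := ⟨X, Y, by simp⟩
    simpa [Function.comp_def] using hl.infix this
  · simp only [List.mem_cons, List.mem_append, List.mem_map, List.not_mem_nil, or_false]
    rintro z (rfl | ⟨m, -, rfl⟩ | rfl)
    · have : X ++ [u] <+: X ++ u :: (M ++ w :: Y) := ⟨M ++ w :: Y, by simp⟩
      rw [show u :: X.reverse = (X ++ [u]).reverse by simp, List.isChain_reverse]
      exact (hl.prefix this).imp fun _ _ h ↦ h.symm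
    · exact List.isChain_singleton m
    · exact hl.suffix ⟨X ++ u :: M, by simp⟩
  · have : combSupport ((u, X.reverse) :: (M.map (·, []) ++ [(w, Y)]))
        = u :: (X.reverse ++ (M ++ w :: Y)) := by
      simp [combSupport, List.flatMap_append, List.flatMap_map]
    rw [this]
    exact ((X.reverse_perm.append_right _).cons u).trans List.perm_middle.symm

lemma exists_isComb_of_mem [DecidableEq V] {l : List V} (hnd : l.Nodup) (hl : l.IsChain G.Adj)
    {u w : V} (hu : u ∈ l) (hw : w ∈ l) (huw : u ≠ w) :
    ∃ L, G.IsComb L u w ∧ (combSupport L).Perm l ∧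
      L.length = Nat.dist (l.idxOf u) (l.idxOf w) + 1 := by
  rcases List.exists_eq_append_cons_append_cons hu hw huw with ⟨X, M, Y, heq⟩ | ⟨X, M, Y, heq⟩
  · obtain ⟨L, hL, hperm, hlen⟩ := exists_isComb_of_eq_append hl heq
    exact ⟨L, hL, hperm, by rw [List.dist_idxOf_of_eq_append_cons_append_cons hnd heq, hlen]⟩
  · obtain ⟨L, hL, hperm, hlen⟩ := exists_isComb_of_eq_append hl heq
    refine ⟨L.reverse, hL.reverse, (combSupport_reverse_perm L).trans hperm, ?_⟩
    rw [List.length_reverse, Nat.dist_comm, List.dist_idxOf_of_eq_append_cons_append_cons hnd heq,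
      hlen]

theorem isHamiltonian_prism_of_paths [Fintype V] [DecidableEq V] {l₁ l₂ : List V}
    (h₁ : l₁.IsChain G.Adj) (h₂ : l₂.IsChain G.Adj) (hnodup : (l₁ ++ l₂).Nodup)
    (hcover : ∀ v, v ∈ l₁ ++ l₂) {a b x y : V} (ha : a ∈ l₁) (hb : b ∈ l₂) (hx : x ∈ l₁)
    (hy : y ∈ l₂) (hxa : x ≠ a) (hby : b ≠ y) (hab : G.Adj a b) (hyx : G.Adj y x)
    (heven : Even (Nat.dist (l₁.idxOf x) (l₁.idxOf a) + Nat.dist (l₂.idxOf b) (l₂.idxOf y))) :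
    (G □ (⊤ : SimpleGraph (Fin 2))).IsHamiltonian := by
  obtain ⟨hnd₁, hnd₂, -⟩ := List.nodup_append.1 hnodup
  obtain ⟨L₁, hL₁, hperm₁, hlen₁⟩ := exists_isComb_of_mem hnd₁ h₁ hx ha hxa
  obtain ⟨L₂, hL₂, hperm₂, hlen₂⟩ := exists_isComb_of_mem hnd₂ h₂ hb hy hby
  have hperm : (combSupport (L₁ ++ L₂)).Perm (l₁ ++ l₂) := by
    rw [combSupport_append]
    exact hperm₁.append hperm₂
  refine (hL₁.append hL₂ hab).isHamiltonian_prism hyx ?_ (hperm.nodup_iff.2 hnodup)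
    fun v ↦ hperm.mem_iff.2 (hcover v)
  rw [List.length_append, hlen₁, hlen₂]
  obtain ⟨k, hk⟩ := heven
  exact ⟨k + 1, by omega⟩

end SimpleGraph

/-- Suppose the vertex set of `G` is the disjoint union of two vertex-disjoint paths
`P₁` and `P₂`, with `a₁` before `a₂` on `P₁` and `b₁` before `b₂` on `P₂`
(positions along a path are measured by `List.indexOf` in its support),
`a₁b₁, a₂b₂ ∈ E(G)`, and the subpaths `P₁[a₁,a₂]` and `P₂[b₁,b₂]` have orders of
different parity.  If there is an edge `xy ∈ E(G)` with `x ∈ V(P₁) \ {a₁, a₂}` and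
`y ∈ V(P₂) \ {b₁, b₂}`, then the prism `G □ K₂` is Hamiltonian. -/
theorem prism_hamiltonian_of_cross_edge {V : Type*} [Fintype V] [DecidableEq V]
    (G : SimpleGraph V) {s₁ t₁ s₂ t₂ : V}
    (P₁ : G.Walk s₁ t₁) (P₂ : G.Walk s₂ t₂) (hP₁ : P₁.IsPath) (hP₂ : P₂.IsPath)
    (hdisj : ∀ x, x ∈ P₁.support → x ∉ P₂.support)
    (hcover : ∀ x : V, x ∈ P₁.support ∨ x ∈ P₂.support)
    (a₁ a₂ b₁ b₂ : V)
    (ha₁ : a₁ ∈ P₁.support) (ha₂ : a₂ ∈ P₁.support)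
    (hb₁ : b₁ ∈ P₂.support) (hb₂ : b₂ ∈ P₂.support)
    (ha : P₁.support.idxOf a₁ < P₁.support.idxOf a₂)
    (hb : P₂.support.idxOf b₁ < P₂.support.idxOf b₂)
    (hab₁ : G.Adj a₁ b₁) (hab₂ : G.Adj a₂ b₂)
    (hpar : (P₁.support.idxOf a₂ - P₁.support.idxOf a₁ + 1) % 2
          ≠ (P₂.support.idxOf b₂ - P₂.support.idxOf b₁ + 1) % 2)
    (x y : V) (hx : x ∈ P₁.support) (hxa : x ≠ a₁ ∧ x ≠ a₂)
    (hy : y ∈ P₂.support) (hyb : y ≠ b₁ ∧ y ≠ b₂)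
    (hadj : G.Adj x y) :
    (G □ (⊤ : SimpleGraph (Fin 2))).IsHamiltonian := by
  have hnodup : (P₁.support ++ P₂.support).Nodup :=
    List.nodup_append.2 ⟨hP₁.support_nodup, hP₂.support_nodup,
      fun u hu _ hv huv ↦ hdisj u hu (huv ▸ hv)⟩
  have hcover' (v : V) : v ∈ P₁.support ++ P₂.support := List.mem_append.2 (hcover v)
  by_cases heven : Even (Nat.dist (P₁.support.idxOf x) (P₁.support.idxOf a₁)
      + Nat.dist (P₂.support.idxOf b₁) (P₂.support.idxOf y))
  · exact isHamiltonian_prism_of_paths P₁.isChain_adj_support P₂.isChain_adj_support hnodup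
      hcover' ha₁ hb₁ hx hy hxa.1 (Ne.symm hyb.1) hab₁ hadj.symm heven
  · refine isHamiltonian_prism_of_paths P₁.isChain_adj_support P₂.isChain_adj_support hnodup
      hcover' ha₂ hb₂ hx hy hxa.2 (Ne.symm hyb.2) hab₂ hadj.symm ?_
    simp only [Nat.even_iff, Nat.dist] at heven ⊢
    omega
end
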